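/- arXiv:2403.13046 — 2 statements merged into one kernel-verified Lean document; each statement's English description precedes it below -/
import Mathlib

section
/- Let H be a Hermitian n×n complex matrix, A an n×n complex matrix, and λ a real number with [H,A] = λ·A. For any vector ψ ∈ ℂⁿ and t ∈ ℝ, let ψ(t) := exp(-(i t)·H) ψ (matrix exponential applied to ψ). Then ⟨ψ(t), A ψ(t)⟩ = exp(i λ t) · ⟨ψ, A ψ⟩, where ⟨·,·⟩ is the standard Hermitian inner product on ℂⁿ. -/
/-!
Since `H * A = A * (H + λ)`, the dynamical symmetry `A` intertwines `e^{zH}` with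
`e^{z(H + λ)} = e^{zλ} e^{zH}`, whence `e^{zH} A e^{-zH} = e^{zλ} A`. For Hermitian `H` the
adjoint of the evolution `e^{-itH}` is `e^{itH}`, so
`⟨ψ(t), A ψ(t)⟩ = ⟨ψ, e^{itH} A e^{-itH} ψ⟩ = e^{iλt} ⟨ψ, A ψ⟩`.
-/

open NormedSpace Matrix

section DynamicalSymmetry

variable {𝔸 : Type*} [NormedRing 𝔸] [NormedAlgebra ℂ 𝔸] [NormedAlgebra ℚ 𝔸] [CompleteSpace 𝔸]
  {H A : 𝔸} {μ : ℂ}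

theorem exp_smul_mul_of_sub_eq_smul (hA : H * A - A * H = μ • A) (z : ℂ) :
    exp (z • H) * A = Complex.exp (z * μ) • (A * exp (z • H)) := by
  have hsemi : SemiconjBy A (z • H + (z * μ) • (1 : 𝔸)) (z • H) := by
    rw [SemiconjBy, mul_add, mul_smul_comm, mul_smul_comm, mul_one, smul_mul_assoc, ← smul_smul,
      ← smul_add, ← sub_eq_iff_eq_add'.mp hA]
  have hcomm : Commute (z • H) ((z * μ) • (1 : 𝔸)) :=
    ((Commute.one_right H).smul_left _).smul_right _
  rw [← hsemi.exp_right, NormedSpace.exp_add_of_commute hcomm,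
    ← Algebra.algebraMap_eq_smul_one, ← algebraMap_exp_comm, Complex.exp_eq_exp_ℂ,
    Algebra.algebraMap_eq_smul_one, mul_smul_comm, mul_smul_comm, mul_one]

theorem exp_smul_mul_mul_exp_neg_smul (hA : H * A - A * H = μ • A) (z : ℂ) :
    exp (z • H) * A * exp (-(z • H)) = Complex.exp (z * μ) • A := by
  rw [exp_smul_mul_of_sub_eq_smul hA, smul_mul_assoc, mul_assoc,
    ← NormedSpace.exp_add_of_commute (Commute.refl _).neg_right, add_neg_cancel, exp_zero, mul_one]

end DynamicalSymmetry

namespace Matrix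

variable {n : Type*} [Fintype n]

theorem star_mulVec_dotProduct_mulVec_mulVec {R : Type*} [CommSemiring R] [StarRing R]
    (U A : Matrix n n R) (ψ : n → R) :
    star (U *ᵥ ψ) ⬝ᵥ (A *ᵥ (U *ᵥ ψ)) = star ψ ⬝ᵥ ((Uᴴ * A * U) *ᵥ ψ) := by
  rw [star_mulVec, ← dotProduct_mulVec, mulVec_mulVec, mulVec_mulVec, mul_assoc]

theorem IsHermitian.conjTranspose_exp_smul [DecidableEq n] {𝕜 : Type*} [RCLike 𝕜]
    {H : Matrix n n 𝕜} (hH : H.IsHermitian) (z : 𝕜) :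
    (NormedSpace.exp (z • H))ᴴ = NormedSpace.exp (star z • H) := by
  rw [← exp_conjTranspose, conjTranspose_smul, hH.eq]

end Matrix

/-- The expectation value of a dynamical symmetry oscillates with frequency `λ`
under Schrödinger evolution `ψ(t) = e^{-itH} ψ`:
`⟨ψ(t), A ψ(t)⟩ = e^{iλt} ⟨ψ, A ψ⟩`. -/
theorem expectation_value_oscillates {n : ℕ}
    (H A : Matrix (Fin n) (Fin n) ℂ) (l : ℝ)
    (hH : Hᴴ = H)
    (hA : H * A - A * H = (l : ℂ) • A)
    (ψ : Fin n → ℂ) (t : ℝ) :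
    star (exp ((-(Complex.I * t)) • H) *ᵥ ψ) ⬝ᵥ
        (A *ᵥ (exp ((-(Complex.I * t)) • H) *ᵥ ψ)) =
      Complex.exp (Complex.I * l * t) * (star ψ ⬝ᵥ (A *ᵥ ψ)) := by
  have hconj : exp ((Complex.I * t) • H) * A * exp (-((Complex.I * t) • H)) =
      Complex.exp (Complex.I * t * l) • A := by
    open scoped Matrix.Norms.Operator in exact exp_smul_mul_mul_exp_neg_smul hA _
  have hstar : star (-(Complex.I * t)) = Complex.I * t := by simp
  rw [star_mulVec_dotProduct_mulVec_mulVec, IsHermitian.conjTranspose_exp_smul hH, hstar,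
    neg_smul, hconj, smul_mulVec, dotProduct_smul, smul_eq_mul, mul_right_comm]
end

section
/- Let H be a Hermitian n×n complex matrix, λ a nonzero real number, and A a nonzero n×n complex matrix with [H,A] = λ·A. Then there exists a vector ψ ∈ ℂⁿ such that the function t ↦ ⟨exp(-(i t)·H) ψ, A (exp(-(i t)·H) ψ)⟩ from ℝ to ℂ is not constant. -/
/-!
Because `H A = A (H + l)`, conjugating `A` by the time evolution only multiplies it by a phase:
`e^{itH} A e^{-itH} = e^{itl} A`, so `⟨ψ(t), A ψ(t)⟩ = e^{itl} ⟨ψ, A ψ⟩`. Over `ℂ` a nonzero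
matrix has a nonzero diagonal value `⟨ψ, A ψ⟩` (polarization), and for that `ψ` the expectation
value changes sign after time `π / l`.
-/

open NormedSpace Matrix

theorem NormedSpace.exp_neg_mul_mul_exp_of_sub_eq_smul {𝕂 𝔸 : Type*} [RCLike 𝕂] [NormedRing 𝔸]
    [NormedAlgebra 𝕂 𝔸] [CompleteSpace 𝔸] {h a : 𝔸} {μ : 𝕂} (hμ : h * a - a * h = μ • a) :
    exp (-h) * a * exp h = exp (-μ) • a := by
  let +nondep : NormedAlgebra ℚ 𝔸 := .restrictScalars ℚ 𝕂 𝔸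
  have hsemi : SemiconjBy a (h + algebraMap 𝕂 𝔸 μ) h := by
    rw [SemiconjBy, mul_add, ← Algebra.commutes, ← Algebra.smul_def, ← hμ, add_sub_cancel]
  have hcomm : Commute (h + algebraMap 𝕂 𝔸 μ) (algebraMap 𝕂 𝔸 (-μ)) :=
    Algebra.commute_algebraMap_right _ _
  calc exp (-h) * a * exp h
      = exp (-h) * a * (exp (h + algebraMap 𝕂 𝔸 μ) * exp (algebraMap 𝕂 𝔸 (-μ))) := by
        rw [← exp_add_of_commute hcomm, map_neg, add_neg_cancel_right]
    _ = a * algebraMap 𝕂 𝔸 (exp (-μ)) := by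
        rw [← mul_assoc, hsemi.exp_neg_mul_mul_exp_eq_self, algebraMap_exp_comm]
    _ = exp (-μ) • a := by rw [← Algebra.commutes, Algebra.smul_def]

theorem Matrix.exp_neg_mul_mul_exp_of_sub_eq_smul {m 𝕂 : Type*} [Fintype m] [DecidableEq m]
    [RCLike 𝕂] {H A : Matrix m m 𝕂} {μ : 𝕂} (hμ : H * A - A * H = μ • A) :
    exp (-H) * A * exp H = exp (-μ) • A :=
  open scoped Norms.Operator in NormedSpace.exp_neg_mul_mul_exp_of_sub_eq_smul hμ

theorem Matrix.star_mulVec_dotProduct_mulVec_mulVec_s7 {m α : Type*} [Fintype m] [CommSemiring α]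
    [StarRing α] (U A : Matrix m m α) (v : m → α) :
    star (U *ᵥ v) ⬝ᵥ (A *ᵥ (U *ᵥ v)) = star v ⬝ᵥ ((Uᴴ * A * U) *ᵥ v) := by
  rw [star_mulVec, ← dotProduct_mulVec, mulVec_mulVec, mulVec_mulVec, mul_assoc]

theorem Matrix.exists_star_dotProduct_mulVec_ne_zero {m : Type*} [Fintype m]
    {A : Matrix m m ℂ} (hA : A ≠ 0) : ∃ v : m → ℂ, star v ⬝ᵥ (A *ᵥ v) ≠ 0 := by
  classical
  by_contra! h
  refine hA (toEuclideanLin.injective ?_)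
  rw [map_zero, ← inner_map_self_eq_zero]
  intro x
  rw [← inner_conj_symm, EuclideanSpace.inner_eq_star_dotProduct, dotProduct_comm]
  simpa using h x

theorem Matrix.IsHermitian.star_exp_mulVec_dotProduct_mulVec {m : Type*} [Fintype m]
    [DecidableEq m] {H A : Matrix m m ℂ} (hH : H.IsHermitian) {μ : ℂ}
    (hA : H * A - A * H = μ • A) (t : ℝ) (v : m → ℂ) :
    star (NormedSpace.exp ((-(Complex.I * t)) • H) *ᵥ v) ⬝ᵥ
        (A *ᵥ (NormedSpace.exp ((-(Complex.I * t)) • H) *ᵥ v)) =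
      Complex.exp (Complex.I * t * μ) * (star v ⬝ᵥ (A *ᵥ v)) := by
  set c : ℂ := -(Complex.I * t)
  have hunitary : (NormedSpace.exp (c • H))ᴴ = NormedSpace.exp (-(c • H)) := by
    rw [← exp_conjTranspose, conjTranspose_smul, hH.eq, ← neg_smul]
    congr 2
    simp [c]
  have hcA : (c • H) * A - A * (c • H) = (c * μ) • A := by
    rw [smul_mul_assoc, mul_smul_comm, ← smul_sub, hA, smul_smul]
  rw [star_mulVec_dotProduct_mulVec_mulVec_s7, hunitary, exp_neg_mul_mul_exp_of_sub_eq_smul hcA,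
    smul_mulVec, dotProduct_smul, smul_eq_mul, ← Complex.exp_eq_exp_ℂ, neg_mul, neg_neg]

/-- A nonzero dynamical symmetry produces non-stationary dynamics: some
expectation value `⟨ψ(t), A ψ(t)⟩` with `ψ(t) = e^{-itH} ψ` is not constant
in `t`. -/
theorem dynamical_symmetry_gives_nonstationary_dynamics {n : ℕ}
    (H A : Matrix (Fin n) (Fin n) ℂ) (l : ℝ)
    (hH : Hᴴ = H) (hl : l ≠ 0) (hA0 : A ≠ 0)
    (hA : H * A - A * H = (l : ℂ) • A) :
    ∃ ψ : Fin n → ℂ, ∃ t₁ t₂ : ℝ,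
      star (exp ((-(Complex.I * t₁)) • H) *ᵥ ψ) ⬝ᵥ
          (A *ᵥ (exp ((-(Complex.I * t₁)) • H) *ᵥ ψ)) ≠
        star (exp ((-(Complex.I * t₂)) • H) *ᵥ ψ) ⬝ᵥ
          (A *ᵥ (exp ((-(Complex.I * t₂)) • H) *ᵥ ψ)) := by
  obtain ⟨ψ, hψ⟩ := exists_star_dotProduct_mulVec_ne_zero hA0
  refine ⟨ψ, 0, Real.pi / l, ?_⟩
  have half_period : Complex.I * ((Real.pi / l : ℝ) : ℂ) * l = Real.pi * Complex.I := by
    push_cast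
    field_simp [Complex.ofReal_ne_zero.mpr hl]
  rw [IsHermitian.star_exp_mulVec_dotProduct_mulVec hH hA,
    IsHermitian.star_exp_mulVec_dotProduct_mulVec hH hA, half_period, Complex.exp_pi_mul_I]
  simpa [CharZero.eq_neg_self_iff] using hψ
end
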